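/- arXiv:1807.01530 — 3 statements merged into one kernel-verified Lean document; each statement's English description precedes it below -/
import Mathlib

section
/- Let A ⊆ X be a measurable set with 0 < μ(A) < ∞, let f : A → [-∞,∞] be measurable with |f| < ∞ a.e. on A, and let 0 < γ < 1. Then lim_{ε→0⁺} m_f^{γ−ε}(A) = m_f^γ(A). -/
open MeasureTheory Metric Filter Set Topology
open scoped ENNReal

/-- The `γ`-median of `f` over `A`:
`m_f^γ(A) = inf {a ∈ ℝ : μ({x ∈ A : f(x) > a}) < γ·μ(A)}`. -/
noncomputable def med {X : Type*} [MeasurableSpace X] (μ : Measure X)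
    (f : X → EReal) (A : Set X) (γ : ℝ) : ℝ :=
  sInf {a : ℝ | μ {x ∈ A | (a : EReal) < f x} < ENNReal.ofReal γ * μ A}

/-!
Write `S γ` for the set of levels `a` with `μ(A ∩ {f > a}) < γ μ(A)`, so that `m_f^γ(A) = inf S γ`.
These sets are upper sets increasing in `γ`. If `f < ∞` a.e. then `μ(A ∩ {f > a}) → 0` as
`a → ∞`, so `S γ ≠ ∅` for `γ > 0`; if `f > -∞` a.e. then `μ(A ∩ {f > a}) → μ(A)` as `a → -∞`,
so `S γ` is bounded below for `γ < 1`. Hence `γ ↦ inf S γ` is antitone on `(0, 1)`, and it is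
left-continuous because `a ∈ S γ` is a strict inequality, which persists for `γ' < γ` close to `γ`.
Continuity from above is applied to `μ.restrict A`, for which the sets `{f > a}` are measurable.
-/

namespace Median

theorem antitone_setOf_coe_lt {X : Type*} (f : X → EReal) :
    Antitone fun a : ℝ => {x | (a : EReal) < f x} :=
  fun _ _ hab _ hx => lt_of_le_of_lt (EReal.coe_le_coe_iff.2 hab) hx

variable {X : Type*} [MeasurableSpace X] {ν : Measure X} {f : X → EReal}

def sparseLevels (ν : Measure X) (f : X → EReal) (γ : ℝ) : Set ℝ :=
  {a : ℝ | ν {x | (a : EReal) < f x} < ENNReal.ofReal γ * ν univ}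

theorem _root_.med_eq_sInf_sparseLevels {μ : Measure X} (hf : Measurable f) (A : Set X) (γ : ℝ) :
    med μ f A γ = sInf (sparseLevels (μ.restrict A) f γ) := by
  unfold med sparseLevels
  congr! 4 with a
  · rw [Measure.restrict_apply (t := {x | (a : EReal) < f x}) (hf measurableSet_Ioi), inter_comm]
    rfl
  · rw [Measure.restrict_apply_univ]

theorem antitone_measure_lt : Antitone fun a : ℝ => ν {x | (a : EReal) < f x} :=
  fun _ _ hab => measure_mono (antitone_setOf_coe_lt f hab)

theorem sparseLevels_mono {t γ : ℝ} (h : t ≤ γ) : sparseLevels ν f t ⊆ sparseLevels ν f γ :=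
  fun _ ha => lt_of_lt_of_le ha (mul_le_mul_left (ENNReal.ofReal_le_ofReal h) _)

theorem tendsto_measure_lt_atTop [IsFiniteMeasure ν] (hf : Measurable f) :
    Tendsto (fun a : ℝ => ν {x | (a : EReal) < f x}) atTop (𝓝 (ν {x | f x = ⊤})) := by
  have hinter : (⋂ a : ℝ, {x | (a : EReal) < f x}) = {x | f x = ⊤} := by
    ext x
    simp [EReal.eq_top_iff_forall_lt]
  rw [← hinter]
  exact tendsto_measure_iInter_atTop (fun _ => (hf measurableSet_Ioi).nullMeasurableSet)
    (antitone_setOf_coe_lt f) ⟨0, measure_ne_top _ _⟩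

theorem tendsto_measure_lt_atBot :
    Tendsto (fun a : ℝ => ν {x | (a : EReal) < f x}) atBot (𝓝 (ν {x | f x ≠ ⊥})) := by
  have hunion : (⋃ a : ℝ, {x | (a : EReal) < f x}) = {x | f x ≠ ⊥} := by
    ext x
    simp only [mem_iUnion, mem_ofPred_eq, ← bot_lt_iff_ne_bot]
    refine ⟨fun ⟨a, ha⟩ => (EReal.bot_lt_coe a).trans ha, fun h => ?_⟩
    obtain ⟨a, -, ha⟩ := EReal.exists_between_coe_real h
    exact ⟨a, ha⟩
  rw [← hunion]
  exact tendsto_measure_iUnion_atBot (antitone_setOf_coe_lt f)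

theorem sparseLevels_nonempty [IsFiniteMeasure ν] (hf : Measurable f)
    (htop : ∀ᵐ x ∂ν, f x ≠ ⊤) (hν : ν ≠ 0) {γ : ℝ} (hγ : 0 < γ) :
    (sparseLevels ν f γ).Nonempty := by
  have hnull : ν {x | f x = ⊤} = 0 := measure_eq_zero_iff_ae_notMem.2 htop
  have hpos : 0 < ENNReal.ofReal γ * ν univ :=
    ENNReal.mul_pos (ENNReal.ofReal_pos.2 hγ).ne' (Measure.measure_univ_ne_zero.2 hν)
  rw [← hnull] at hpos
  exact ((tendsto_measure_lt_atTop hf).eventually (eventually_lt_nhds hpos)).exists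

theorem bddBelow_sparseLevels [IsFiniteMeasure ν] (hbot : ∀ᵐ x ∂ν, f x ≠ ⊥) (hν : ν ≠ 0)
    {γ : ℝ} (hγ : γ < 1) : BddBelow (sparseLevels ν f γ) := by
  have hfull : ν {x | f x ≠ ⊥} = ν univ := measure_congr (ae_eq_univ.2 hbot)
  have hlt : ENNReal.ofReal γ * ν univ < ν univ := by
    simpa only [one_mul] using ENNReal.mul_lt_mul_left (Measure.measure_univ_ne_zero.2 hν)
      (measure_ne_top _ _) (ENNReal.ofReal_lt_one.2 hγ)
  have hlim := tendsto_measure_lt_atBot (ν := ν) (f := f)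
  rw [hfull] at hlim
  obtain ⟨b, hb⟩ := (hlim.eventually (eventually_gt_nhds hlt)).exists
  refine ⟨b, fun a ha => le_of_not_gt fun hab => ?_⟩
  exact (hb.trans_le (antitone_measure_lt hab.le)).not_gt ha

theorem eventually_mem_sparseLevels [IsFiniteMeasure ν] {a γ : ℝ} (ha : a ∈ sparseLevels ν f γ) :
    ∀ᶠ t in 𝓝 γ, a ∈ sparseLevels ν f t := by
  have hcont : Tendsto (fun t => ENNReal.ofReal t * ν univ) (𝓝 γ) (𝓝 (ENNReal.ofReal γ * ν univ)) :=
    ENNReal.Tendsto.mul_const (ENNReal.continuous_ofReal.tendsto γ) (Or.inr (measure_ne_top _ _))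
  exact hcont.eventually (eventually_gt_nhds ha)

theorem tendsto_sInf_sparseLevels_nhdsLT [IsFiniteMeasure ν] (hf : Measurable f)
    (hfin : ∀ᵐ x ∂ν, f x ≠ ⊤ ∧ f x ≠ ⊥) (hν : ν ≠ 0) {γ : ℝ} (hγ0 : 0 < γ) (hγ1 : γ < 1) :
    Tendsto (fun t => sInf (sparseLevels ν f t)) (𝓝[<] γ) (𝓝 (sInf (sparseLevels ν f γ))) := by
  have hbdd : BddBelow (sparseLevels ν f γ) :=
    bddBelow_sparseLevels (hfin.mono fun _ hx => hx.2) hν hγ1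
  have hbelow : ∀ᶠ t in 𝓝[<] γ, t ∈ Ioo 0 γ := Ioo_mem_nhdsLT hγ0
  refine tendsto_order.2 ⟨fun b hb => ?_, fun b hb => ?_⟩
  · filter_upwards [hbelow] with t ht
    exact hb.trans_le <| csInf_le_csInf hbdd
      (sparseLevels_nonempty hf (hfin.mono fun _ hx => hx.1) hν ht.1) (sparseLevels_mono ht.2.le)
  · obtain ⟨a, ha, hab⟩ := exists_lt_of_csInf_lt (sparseLevels_nonempty hf
      (hfin.mono fun _ hx => hx.1) hν hγ0) hb
    filter_upwards [hbelow, nhdsWithin_le_nhds (eventually_mem_sparseLevels ha)] with t ht hat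
    exact (csInf_le (hbdd.mono (sparseLevels_mono ht.2.le)) hat).trans_lt hab

end Median

theorem stmt5_general {X : Type*} [MeasurableSpace X]
    (μ : Measure X)
    (A : Set X) (hA0 : 0 < μ A) (hA1 : μ A < ⊤)
    (f : X → EReal) (hf : Measurable f)
    (hfin : ∀ᵐ x ∂(μ.restrict A), f x ≠ ⊤ ∧ f x ≠ ⊥)
    (γ : ℝ) (hγ0 : 0 < γ) (hγ1 : γ < 1) :
    Tendsto (fun ε : ℝ => med μ f A (γ - ε)) (𝓝[>] 0) (𝓝 (med μ f A γ)) := by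
  have : IsFiniteMeasure (μ.restrict A) := isFiniteMeasure_restrict.2 hA1.ne
  have hν : μ.restrict A ≠ 0 := Measure.restrict_eq_zero.not.2 hA0.ne'
  have hshift : Tendsto (fun ε : ℝ => γ - ε) (𝓝[>] 0) (𝓝[<] γ) :=
    tendsto_nhdsWithin_of_tendsto_nhds_of_eventually_within _
      ((continuous_sub_left γ).tendsto' 0 γ (sub_zero γ) |>.mono_left nhdsWithin_le_nhds)
      (eventually_nhdsWithin_of_forall fun _ hε => sub_lt_self γ hε)
  simp only [med_eq_sInf_sparseLevels hf A]
  exact (Median.tendsto_sInf_sparseLevels_nhdsLT hf hfin hν hγ0 hγ1).comp hshift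

/-- `lim_{ε→0⁺} m_f^{γ−ε}(A) = m_f^γ(A)`. -/
theorem stmt5 {X : Type*} [MetricSpace X] [MeasurableSpace X] [BorelSpace X]
    (μ : Measure X)
    (hball : ∀ (x : X) (r : ℝ), 0 < r → 0 < μ (ball x r) ∧ μ (ball x r) < ⊤)
    (A : Set X) (hA : MeasurableSet A) (hA0 : 0 < μ A) (hA1 : μ A < ⊤)
    (f : X → EReal) (hf : Measurable f)
    (hfin : ∀ᵐ x ∂(μ.restrict A), f x ≠ ⊤ ∧ f x ≠ ⊥)
    (γ : ℝ) (hγ0 : 0 < γ) (hγ1 : γ < 1) :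
    Tendsto (fun ε : ℝ => med μ f A (γ - ε)) (𝓝[>] 0) (𝓝 (med μ f A γ)) :=
  stmt5_general μ A hA0 hA1 f hf hfin γ hγ0 hγ1
end

section
/- Let 𝓑 be a homothecy invariant Busemann–Feller basis on ℝ^n which is a density basis. Then for every 0 < γ < 1 there exists a constant C = C(γ) such that |{x ∈ ℝ^n : M^γ_𝓑 f(x) > λ}| ≤ C·|{x ∈ ℝ^n : |f(x)| > λ}| for every f ∈ L^0(ℝ^n) and every λ > 0. -/
open MeasureTheory Metric Filter Set Topology
open scoped ENNReal NNReal

/-- `f ∈ L⁰(X)`: `f` is measurable and finite almost everywhere. -/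
def MemL0 {X : Type*} [MeasurableSpace X] (μ : Measure X) (f : X → EReal) : Prop :=
  Measurable f ∧ ∀ᵐ x ∂μ, f x ≠ ⊤ ∧ f x ≠ ⊥

/-- A differentiation basis on a metric measure space: each `𝓑(x)` consists of bounded
measurable sets of positive measure containing `x`, with sets of arbitrarily small diameter. -/
structure IsDiffBasis {X : Type*} [MetricSpace X] [MeasurableSpace X]
    (μ : Measure X) (𝓑 : X → Set (Set X)) : Prop where
  mem_of : ∀ x B, B ∈ 𝓑 x → x ∈ B
  measurableSet : ∀ x B, B ∈ 𝓑 x → MeasurableSet B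
  bounded : ∀ x B, B ∈ 𝓑 x → Bornology.IsBounded B
  pos : ∀ x B, B ∈ 𝓑 x → 0 < μ B
  small : ∀ x, ∀ ε : ℝ, 0 < ε → ∃ B ∈ 𝓑 x, diam B < ε

/-- A Busemann–Feller basis: a differentiation basis whose members are open and such that
`x ∈ B ∈ 𝓑` implies `B ∈ 𝓑(x)`. -/
structure IsBFBasis {X : Type*} [MetricSpace X] [MeasurableSpace X]
    (μ : Measure X) (𝓑 : X → Set (Set X)) extends IsDiffBasis μ 𝓑 : Prop where
  isOpen : ∀ x B, B ∈ 𝓑 x → IsOpen B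
  feller : ∀ x y B, B ∈ 𝓑 y → x ∈ B → B ∈ 𝓑 x

/-- `lim_{𝓑 ∋ B → x} F(B) = L`: the limit as `diam B → 0` over `B ∈ 𝓑(x)`. -/
def BasisLim {X : Type*} [MetricSpace X] (𝓑 : X → Set (Set X)) (x : X)
    (F : Set X → ℝ) (L : ℝ) : Prop :=
  ∀ ε : ℝ, 0 < ε → ∃ δ : ℝ, 0 < δ ∧ ∀ B ∈ 𝓑 x, diam B < δ → |F B - L| < ε

/-- A density basis: for every measurable `A`, `lim_{𝓑∋B→x} μ(A∩B)/μ(B) = χ_A(x)` a.e. -/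
def IsDensityBasis {X : Type*} [MetricSpace X] [MeasurableSpace X]
    (μ : Measure X) (𝓑 : X → Set (Set X)) : Prop :=
  ∀ A : Set X, MeasurableSet A → ∀ᵐ x ∂μ,
    BasisLim 𝓑 x (fun B => (μ (A ∩ B) / μ B).toReal) (A.indicator (fun _ => (1 : ℝ)) x)

/-- The `γ`-median maximal function `M^γ_𝓑 f(x) = sup {m^γ_{|f|}(B) : x ∈ B ∈ 𝓑}`. -/
noncomputable def medMax {X : Type*} [MetricSpace X] [MeasurableSpace X] (μ : Measure X)
    (𝓑 : X → Set (Set X)) (f : X → EReal) (γ : ℝ) (x : X) : EReal :=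
  ⨆ (B : Set X) (_ : ∃ y, B ∈ 𝓑 y) (_ : x ∈ B),
    (med μ (fun z => max (f z) (-f z)) B γ : EReal)

/-- The `L^p`-(quasi)norm of an extended-real valued function, `0 < p < ∞`. -/
noncomputable def lpN {X : Type*} [MeasurableSpace X] (μ : Measure X) (p : ℝ)
    (f : X → EReal) : ℝ≥0∞ :=
  (∫⁻ x, (f x).abs ^ p ∂μ) ^ (1 / p)

/-- `𝓑` is homothecy invariant: homothetic images (under `z ↦ a + r • z`, `r > 0`)
of basis sets belong to the basis. -/
def HomInv {n : ℕ}
    (𝓑 : EuclideanSpace ℝ (Fin n) → Set (Set (EuclideanSpace ℝ (Fin n)))) : Prop :=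
  ∀ B : Set (EuclideanSpace ℝ (Fin n)), (∃ y, B ∈ 𝓑 y) →
    ∀ (a : EuclideanSpace ℝ (Fin n)) (r : ℝ), 0 < r →
      ∃ y, (fun z => a + r • z) '' B ∈ 𝓑 y

/-! The level set `{M^γ_𝓑 f > λ}` lies in the halo set `H_γ(E) = ⋃ {B ∈ 𝓑 : |E ∩ B| ≥ γ|B|}`
of `E = {|f| > λ}`, so it suffices to bound `|H_γ(E)| ≤ C|E|`. If no `C` works, then for each
`ε > 0` some `E` has a halo `1/ε` times larger than itself, and a finite union `U` of the basis
sets forming that halo still satisfies `|E ∩ U| < ε|U|`. Tiling almost all of the unit ball by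
small disjoint homothetic copies of a compact part of `U` (Vitali) and placing a copy of `E ∩ U`
in each tile yields a set `S` with `|S| = O(ε)` such that, by homothecy invariance and the
Busemann–Feller property, almost every point of the ball lies in arbitrarily small basis sets in
which `S` has density at least `γ`. For a summable sequence `ε_k` the union `A` of these sets is
smaller than the ball, yet almost every point of the ball outside `A` sees density `≥ γ` of `A`
along `𝓑`, contradicting the density property. -/

open Bornology Module
open scoped Pointwise

section Homothety

variable {E : Type*} [NormedAddCommGroup E] [NormedSpace ℝ E]

lemma image_add_smul_eq_vadd_smul (a : E) (t : ℝ) (s : Set E) :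
    (fun z => a + t • z) '' s = a +ᵥ t • s := by
  rw [← image_smul, ← image_vadd, image_image]
  rfl

lemma diam_image_add_smul (a : E) (t : ℝ) (s : Set E) :
    diam ((fun z => a + t • z) '' s) = |t| * diam s := by
  rw [image_add_smul_eq_vadd_smul, diam_vadd, diam_smul₀, Real.norm_eq_abs]

lemma image_add_smul_subset_closedBall (a : E) {t R : ℝ} (ht : 0 ≤ t) {s : Set E}
    (hs : s ⊆ closedBall 0 R) : (fun z => a + t • z) '' s ⊆ closedBall a (t * R) := by
  rintro _ ⟨z, hz, rfl⟩
  rw [mem_closedBall, dist_self_add_left, norm_smul, Real.norm_eq_abs, abs_of_nonneg ht]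
  exact mul_le_mul_of_nonneg_left (mem_closedBall_zero_iff.1 (hs hz)) ht

variable [MeasurableSpace E] [BorelSpace E] [FiniteDimensional ℝ E]
  (μ : Measure E) [μ.IsAddHaarMeasure]

lemma addHaar_image_add_smul (a : E) (t : ℝ) (s : Set E) :
    μ ((fun z => a + t • z) '' s) = ENNReal.ofReal (|t| ^ finrank ℝ E) * μ s := by
  rw [image_add_smul_eq_vadd_smul, measure_vadd, Measure.addHaar_smul, abs_pow]

lemma mul_addHaar_image_add_smul_le (a : E) (t : ℝ) {c : ℝ≥0∞} {s s' : Set E}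
    (h : c * μ s ≤ μ s') :
    c * μ ((fun z => a + t • z) '' s) ≤ μ ((fun z => a + t • z) '' s') := by
  rw [addHaar_image_add_smul, addHaar_image_add_smul, mul_left_comm]
  gcongr

theorem exists_pairwiseDisjoint_image_add_smul_ae_cover {K : Set E} (hK : IsCompact K)
    (hKint : (interior K).Nonempty) (s : Set E) {t₀ : ℝ} (ht₀ : 0 < t₀) :
    ∃ u : Set (E × ℝ), u.Countable ∧ (∀ p ∈ u, p.1 ∈ s ∧ 0 < p.2 ∧ p.2 ≤ t₀) ∧
      u.PairwiseDisjoint (fun p => (fun z => p.1 + p.2 • z) '' K) ∧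
      μ (s \ ⋃ p ∈ u, (fun z => p.1 + p.2 • z) '' K) = 0 := by
  obtain ⟨R, hR, hKR⟩ := hK.isBounded.subset_closedBall_lt 0 0
  have hK0 : μ K ≠ 0 := (μ.measure_pos_of_nonempty_interior hKint).ne'
  set C : ℝ≥0 := (ENNReal.ofReal ((3 * R) ^ finrank ℝ E) * μ (ball 0 1) / μ K).toNNReal
  have hC : ENNReal.ofReal ((3 * R) ^ finrank ℝ E) * μ (ball 0 1) = C * μ K := by
    rw [ENNReal.coe_toNNReal (ENNReal.div_lt_top (by finiteness) hK0).ne,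
      ENNReal.div_mul_cancel hK0 hK.measure_ne_top]
  obtain ⟨u, hut, hu, hdisj, hcov⟩ := Vitali.exists_disjoint_covering_ae μ s
    {p : E × ℝ | p.1 ∈ s ∧ 0 < p.2 ∧ p.2 ≤ t₀} C (fun p => p.2 * R) Prod.fst
    (fun p => (fun z => p.1 + p.2 • z) '' K)
    (fun p hp => image_add_smul_subset_closedBall p.1 hp.2.1.le hKR)
    (fun p ⟨_, ht, _⟩ => by
      rw [Measure.addHaar_closedBall _ _ (by positivity), addHaar_image_add_smul, abs_of_pos ht,
        show 3 * (p.2 * R) = p.2 * (3 * R) by ring, mul_pow, ENNReal.ofReal_mul (by positivity),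
        mul_assoc, hC, mul_left_comm])
    (fun p hp => (hKint.image _).mono
      (((isOpenMap_add_left p.1).comp (isOpenMap_smul₀ hp.2.1.ne')).image_interior_subset K))
    (fun p _ => (hK.image (by fun_prop : Continuous fun z => p.1 + p.2 • z)).isClosed)
    (fun x hx ε hε => ⟨(x, min t₀ (ε / R)),
      ⟨hx, lt_min ht₀ (div_pos hε hR), min_le_left _ _⟩,
      (mul_le_mul_of_nonneg_right (min_le_right _ _) hR.le).trans_eq (div_mul_cancel₀ ε hR.ne'),
      rfl⟩)
  exact ⟨u, hu, fun p hp => hut hp, hdisj, hcov⟩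

end Homothety

theorem IsOpen.exists_isCompact_interior_nonempty_lt {X : Type*} [TopologicalSpace X]
    [LocallyCompactSpace X] [MeasurableSpace X] {μ : Measure X} [μ.Regular] {U : Set X}
    (hU : IsOpen U) {r : ℝ≥0∞} (hr : r < μ U) :
    ∃ K ⊆ U, IsCompact K ∧ (interior K).Nonempty ∧ r < μ K := by
  obtain ⟨K, hKU, hK, hrK⟩ := hU.exists_lt_isCompact hr
  obtain ⟨z, hz⟩ := nonempty_of_measure_ne_zero (pos_of_gt hr).ne'
  obtain ⟨L, hL, hzL, hLU⟩ := exists_compact_subset hU hz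
  exact ⟨K ∪ L, union_subset hKU hLU, hK.union hL,
    ⟨z, interior_mono subset_union_right hzL⟩, hrK.trans_le (measure_mono subset_union_left)⟩

section Basis

variable {X : Type*} [MeasurableSpace X]

def haloSet (μ : Measure X) (𝓑 : X → Set (Set X)) (γ : ℝ) (E : Set X) : Set X :=
  ⋃₀ {B | (∃ y, B ∈ 𝓑 y) ∧ ENNReal.ofReal γ * μ B ≤ μ (E ∩ B)}

lemma med_le_of_measure_lt {μ : Measure X} {g : X → EReal} (hg : ∀ z, 0 ≤ g z) {B : Set X}
    {γ : ℝ} (hγ : γ ≤ 1) {a : ℝ}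
    (ha : μ ({z | (a : EReal) < g z} ∩ B) < ENNReal.ofReal γ * μ B) :
    med μ g B γ ≤ a := by
  refine csInf_le ⟨0, fun b hb => ?_⟩ (by rwa [inter_comm, ← sep_mem_eq] at ha)
  by_contra! hb0
  have hB : {z ∈ B | (b : EReal) < g z} = B :=
    sep_eq_self_iff_mem_true.2 fun z _ => (EReal.coe_lt_coe_iff.2 hb0).trans_le (hg z)
  rw [mem_ofPred_eq, hB] at hb
  exact hb.not_ge (mul_le_of_le_one_left' (ENNReal.ofReal_le_one.2 hγ))

variable [MetricSpace X]

lemma setOf_lt_medMax_subset_haloSet (μ : Measure X) (𝓑 : X → Set (Set X))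
    (f : X → EReal) {γ : ℝ} (hγ : γ ≤ 1) (lam : ℝ) :
    {x | (lam : EReal) < medMax μ 𝓑 f γ x} ⊆
      haloSet μ 𝓑 γ {x | (lam : EReal) < max (f x) (-f x)} := by
  intro x hx
  simp only [mem_ofPred_eq, medMax, lt_iSup_iff] at hx
  obtain ⟨B, hB, hxB, hlt⟩ := hx
  refine ⟨B, ⟨hB, ?_⟩, hxB⟩
  by_contra! h
  have hg z : 0 ≤ max (f z) (-f z) :=
    le_max_iff.2 ((le_total 0 (f z)).imp_right EReal.neg_nonneg.2)
  exact (med_le_of_measure_lt hg hγ h).not_gt (EReal.coe_lt_coe_iff.1 hlt)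

lemma exists_isOpen_of_lt_measure_haloSet {μ : Measure X} [μ.Regular]
    {𝓑 : X → Set (Set X)} (h𝓑 : IsBFBasis μ 𝓑) {γ : ℝ} {E : Set X} {C : ℝ≥0∞}
    (hE : C * μ E < μ (haloSet μ 𝓑 γ E)) :
    ∃ U, IsOpen U ∧ IsBounded U ∧ C * μ (E ∩ U) < μ U ∧ ∀ z ∈ U, ∃ B, (∃ y, B ∈ 𝓑 y) ∧
      z ∈ B ∧ B ⊆ U ∧ ENNReal.ofReal γ * μ B ≤ μ (E ∩ B) := by
  set 𝓓 := {B | (∃ y, B ∈ 𝓑 y) ∧ ENNReal.ofReal γ * μ B ≤ μ (E ∩ B)}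
  have hopen : ∀ B ∈ 𝓓, IsOpen B := fun B ⟨⟨y, hy⟩, _⟩ => h𝓑.isOpen y B hy
  obtain ⟨K, hKH, hK, hEK⟩ := (isOpen_sUnion hopen).exists_lt_isCompact hE
  obtain ⟨𝓕, h𝓕𝓓, h𝓕, hK𝓕⟩ := hK.elim_finite_subcover_image (c := id) hopen
    (hKH.trans_eq sUnion_eq_biUnion)
  refine ⟨⋃₀ 𝓕, isOpen_sUnion fun B hB => hopen B (h𝓕𝓓 hB),
    (isBounded_sUnion h𝓕).2 fun B hB => ?_, ?_, fun z hz => ?_⟩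
  · obtain ⟨⟨y, hy⟩, _⟩ := h𝓕𝓓 hB
    exact h𝓑.bounded y B hy
  · calc C * μ (E ∩ ⋃₀ 𝓕) ≤ C * μ E := by gcongr; exact inter_subset_left
      _ < μ K := hEK
      _ ≤ μ (⋃₀ 𝓕) := by rw [sUnion_eq_biUnion]; exact measure_mono hK𝓕
  · obtain ⟨B, hB, hzB⟩ := hz
    exact ⟨B, (h𝓕𝓓 hB).1, hzB, subset_sUnion_of_mem hB, (h𝓕𝓓 hB).2⟩

lemma IsDensityBasis.ae_exists_lt_of_notMem [ProperSpace X] {μ : Measure X}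
    [IsFiniteMeasureOnCompacts μ] {𝓑 : X → Set (Set X)} (hdens : IsDensityBasis μ 𝓑)
    (h𝓑 : IsDiffBasis μ 𝓑) {A : Set X} (hA : MeasurableSet A) {γ : ℝ} (hγ : 0 < γ) :
    ∀ᵐ x ∂μ, x ∉ A →
      ∃ δ > 0, ∀ W ∈ 𝓑 x, diam W < δ → μ (A ∩ W) < ENNReal.ofReal γ * μ W := by
  filter_upwards [hdens A hA] with x hx hxA
  obtain ⟨δ, hδ, hlt⟩ := hx γ hγ
  refine ⟨δ, hδ, fun W hW hWδ => ?_⟩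
  have hW0 := (h𝓑.pos x W hW).ne'
  have hWtop := (h𝓑.bounded x W hW).measure_lt_top (μ := μ)
  have hratio := hlt W hW hWδ
  rw [indicator_of_notMem hxA, sub_zero, abs_of_nonneg ENNReal.toReal_nonneg,
    ← ENNReal.lt_ofReal_iff_toReal_lt
      (ENNReal.div_ne_top ((measure_mono inter_subset_right).trans_lt hWtop).ne hW0)] at hratio
  rwa [ENNReal.div_lt_iff (Or.inl hW0) (Or.inl hWtop.ne)] at hratio

lemma IsDensityBasis.measure_le_tsum_of_dense [ProperSpace X] {μ : Measure X}
    [IsFiniteMeasureOnCompacts μ] {𝓑 : X → Set (Set X)} (hdens : IsDensityBasis μ 𝓑)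
    (h𝓑 : IsDiffBasis μ 𝓑) {γ : ℝ} (hγ : 0 < γ) {Q : Set X} {S : ℕ → Set X}
    (hS : ∀ k : ℕ, ∀ᵐ x ∂μ, x ∈ Q →
      ∃ W ∈ 𝓑 x, diam W < 1 / (k + 1) ∧ ENNReal.ofReal γ * μ W ≤ μ (S k ∩ W)) :
    μ Q ≤ ∑' k, μ (S k) := by
  -- `IsDensityBasis` only speaks about measurable sets, and the `S k` need not be measurable.
  set A := toMeasurable μ (⋃ k, S k)
  have hQA : ∀ᵐ x ∂μ, x ∈ Q → x ∈ A := by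
    filter_upwards [ae_all_iff.2 hS, hdens.ae_exists_lt_of_notMem h𝓑
      (measurableSet_toMeasurable _ _) hγ] with x hxS hxA hxQ
    by_contra hx
    obtain ⟨δ, hδ, hlt⟩ := hxA hx
    obtain ⟨k, hk⟩ := exists_nat_one_div_lt hδ
    obtain ⟨W, hW, hWk, hSW⟩ := hxS k hxQ
    refine (hlt W hW (hWk.trans hk)).not_ge (hSW.trans (measure_mono ?_))
    exact inter_subset_inter_left _ ((subset_iUnion S k).trans (subset_toMeasurable _ _))
  calc μ Q ≤ μ A := measure_mono_ae hQA
    _ = μ (⋃ k, S k) := measure_toMeasurable _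
    _ ≤ ∑' k, μ (S k) := measure_iUnion_le _

end Basis

section Euclidean

variable {n : ℕ} {𝓑 : EuclideanSpace ℝ (Fin n) → Set (Set (EuclideanSpace ℝ (Fin n)))}

lemma image_add_smul_mem_of_homInv (h𝓑 : IsBFBasis volume 𝓑) (hhom : HomInv 𝓑)
    {B : Set (EuclideanSpace ℝ (Fin n))} (hB : ∃ y, B ∈ 𝓑 y) (a : EuclideanSpace ℝ (Fin n))
    {t : ℝ} (ht : 0 < t) {z : EuclideanSpace ℝ (Fin n)} (hz : z ∈ B) :
    (fun w => a + t • w) '' B ∈ 𝓑 (a + t • z) := by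
  obtain ⟨y, hy⟩ := hhom B hB a t ht
  exact h𝓑.feller _ y _ hy (mem_image_of_mem _ hz)

lemma exists_small_set_with_dense_basis_sets_ae (h𝓑 : IsBFBasis volume 𝓑) (hhom : HomInv 𝓑)
    {γ : ℝ} {E : Set (EuclideanSpace ℝ (Fin n))} {C : ℝ≥0∞}
    (hE : C * volume E < volume (haloSet volume 𝓑 γ E)) {d : ℝ} (hd : 0 < d) :
    ∃ S : Set (EuclideanSpace ℝ (Fin n)),
      C * volume S ≤ volume (ball (0 : EuclideanSpace ℝ (Fin n)) 2) ∧
      ∀ᵐ x, x ∈ closedBall (0 : EuclideanSpace ℝ (Fin n)) 1 →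
        ∃ W ∈ 𝓑 x, diam W < d ∧ ENNReal.ofReal γ * volume W ≤ volume (S ∩ W) := by
  obtain ⟨U, hUo, hUb, hEU, hU𝓑⟩ := exists_isOpen_of_lt_measure_haloSet h𝓑 hE
  obtain ⟨K, hKU, hK, hKint, hEK⟩ := hUo.exists_isCompact_interior_nonempty_lt hEU
  obtain ⟨R, hR, hUR⟩ := hUb.subset_closedBall_lt 0 0
  -- Tiles of scale `≤ t₀` stay in `ball 0 2`; rescaled basis sets inside `U` have diameter `< d`.
  set t₀ := min d 1 / (4 * R)
  have ht₀R : t₀ * R = min d 1 / 4 := by simp only [t₀]; field_simp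
  obtain ⟨u, hu, hut, hdisj, hcov⟩ := exists_pairwiseDisjoint_image_add_smul_ae_cover volume hK
    hKint (closedBall 0 1) (show 0 < t₀ by positivity)
  refine ⟨⋃ p ∈ u, (fun z => p.1 + p.2 • z) '' (E ∩ U), ?_, ?_⟩
  · calc C * volume (⋃ p ∈ u, (fun z => p.1 + p.2 • z) '' (E ∩ U))
        ≤ ∑' p : u, C * volume ((fun z => p.1.1 + p.1.2 • z) '' (E ∩ U)) := by
          rw [ENNReal.tsum_mul_left]; gcongr; exact measure_biUnion_le _ hu _
      _ ≤ ∑' p : u, volume ((fun z => p.1.1 + p.1.2 • z) '' K) :=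
          ENNReal.tsum_le_tsum fun p => mul_addHaar_image_add_smul_le _ _ _ hEK.le
      _ = volume (⋃ p ∈ u, (fun z => p.1 + p.2 • z) '' K) :=
          (measure_biUnion hu hdisj fun p _ => (hK.image (by fun_prop)).measurableSet).symm
      _ ≤ volume (ball (0 : EuclideanSpace ℝ (Fin n)) 2) := by
          refine measure_mono (iUnion₂_subset fun p hp => ?_)
          obtain ⟨hp1, ht, htt₀⟩ := hut p hp
          refine (image_add_smul_subset_closedBall p.1 ht.le (hKU.trans hUR)).trans
            (closedBall_subset_ball' ?_)
          have : p.2 * R ≤ t₀ * R := by gcongr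
          rw [mem_closedBall] at hp1
          linarith [min_le_right d 1]
  · filter_upwards [ae_le_set.2 hcov] with x hx hxQ
    obtain ⟨p, hp, z, hzK, rfl⟩ := mem_iUnion₂.1 (hx hxQ)
    obtain ⟨B, hB, hzB, hBU, hEB⟩ := hU𝓑 z (hKU hzK)
    obtain ⟨-, ht, htt₀⟩ := hut p hp
    refine ⟨_, image_add_smul_mem_of_homInv h𝓑 hhom hB p.1 ht hzB, ?_, ?_⟩
    · have hB2R : diam B ≤ 2 * R :=
        (diam_mono (hBU.trans hUR) isBounded_closedBall).trans (diam_closedBall hR.le)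
      rw [diam_image_add_smul, abs_of_pos ht]
      calc p.2 * diam B ≤ t₀ * (2 * R) := by gcongr
        _ = min d 1 / 2 := by linarith
        _ < d := by linarith [min_le_left d 1, lt_min hd one_pos]
    · refine (mul_addHaar_image_add_smul_le _ p.1 p.2 hEB).trans (measure_mono (subset_inter
        ((image_mono (inter_subset_inter_right E hBU)).trans ?_) (image_mono inter_subset_right)))
      exact subset_biUnion_of_mem (u := fun p : EuclideanSpace ℝ (Fin n) × ℝ =>
        (fun z => p.1 + p.2 • z) '' (E ∩ U)) hp

theorem exists_measure_haloSet_le (h𝓑 : IsBFBasis volume 𝓑) (hhom : HomInv 𝓑)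
    (hdens : IsDensityBasis volume 𝓑) {γ : ℝ} (hγ : 0 < γ) :
    ∃ C : ℝ≥0, 0 < C ∧
      ∀ E : Set (EuclideanSpace ℝ (Fin n)), volume (haloSet volume 𝓑 γ E) ≤ C * volume E := by
  by_contra! hfail
  set Q := closedBall (0 : EuclideanSpace ℝ (Fin n)) 1
  set V := volume (ball (0 : EuclideanSpace ℝ (Fin n)) 2)
  obtain ⟨η, hη, hηQ⟩ := ENNReal.exists_nnreal_pos_mul_lt
    (show V < ⊤ from measure_ball_lt_top).ne
    (measure_closedBall_pos volume (0 : EuclideanSpace ℝ (Fin n)) one_pos).ne'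
  obtain ⟨ε, hε, hεη⟩ := ENNReal.exists_pos_sum_of_countable (ENNReal.coe_ne_zero.2 hη.ne') ℕ
  have hS : ∀ k : ℕ, ∃ S, volume S ≤ ε k * V ∧ ∀ᵐ x, x ∈ Q →
      ∃ W ∈ 𝓑 x, diam W < 1 / (k + 1) ∧ ENNReal.ofReal γ * volume W ≤ volume (S ∩ W) := by
    intro k
    obtain ⟨E, hE⟩ := hfail (ε k)⁻¹ (inv_pos.2 (hε k))
    rw [ENNReal.coe_inv (hε k).ne'] at hE
    obtain ⟨S, hSV, hSQ⟩ :=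
      exists_small_set_with_dense_basis_sets_ae h𝓑 hhom hE (d := 1 / (k + 1)) (by positivity)
    refine ⟨S, ?_, hSQ⟩
    calc volume S = ε k * ((ε k : ℝ≥0∞)⁻¹ * volume S) := by
          rw [← mul_assoc, ENNReal.mul_inv_cancel (by simpa using (hε k).ne') ENNReal.coe_ne_top,
            one_mul]
      _ ≤ ε k * V := by gcongr
  choose S hSV hSQ using hS
  refine (hdens.measure_le_tsum_of_dense h𝓑.toIsDiffBasis hγ hSQ).not_gt ?_
  calc ∑' k, volume (S k) ≤ ∑' k, ε k * V := ENNReal.tsum_le_tsum hSV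
    _ = (∑' k, (ε k : ℝ≥0∞)) * V := ENNReal.tsum_mul_right
    _ ≤ η * V := by gcongr
    _ < volume Q := hηQ

end Euclidean

/-- a homothecy invariant Busemann–Feller density basis on `ℝⁿ` satisfies the
weak-type estimate `|{M^γ_𝓑 f > λ}| ≤ C |{|f| > λ}|` for all `f ∈ L⁰` and `λ > 0`. -/
theorem stmt11 (n : ℕ)
    (𝓑 : EuclideanSpace ℝ (Fin n) → Set (Set (EuclideanSpace ℝ (Fin n))))
    (h𝓑 : IsBFBasis volume 𝓑) (hhom : HomInv 𝓑)
    (hdens : IsDensityBasis volume 𝓑)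
    (γ : ℝ) (hγ0 : 0 < γ) (hγ1 : γ < 1) :
    ∃ C : ℝ≥0, 0 < C ∧ ∀ f : EuclideanSpace ℝ (Fin n) → EReal, MemL0 volume f →
      ∀ lam : ℝ, 0 < lam →
        volume {x | (lam : EReal) < medMax volume 𝓑 f γ x} ≤
          C * volume {x | (lam : EReal) < max (f x) (-f x)} := by
  obtain ⟨C, hC, hhalo⟩ := exists_measure_haloSet_le h𝓑 hhom hdens hγ0
  refine ⟨C, hC, fun f _ lam _ => ?_⟩
  exact (measure_mono (setOf_lt_medMax_subset_haloSet volume 𝓑 f hγ1.le lam)).trans (hhalo _)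
end

section
/- Let X be a separable metric measure space, let 𝓑 be a Busemann–Feller basis on X, let 0 < s ≤ 1 and 1 < p < ∞, and let Cap be the M^{s,p}-capacity. Consider the claims: (1) for every 0 < γ < 1 and every u ∈ M^{s,p}(X), Cap({x ∈ X : M^γ_𝓑 u(x) > λ}) → 0 as λ → ∞; (2) for every 0 < γ < 1, every λ > 0, and every sequence (u_k) in M^{s,p}(X) with ‖u_k‖_{M^{s,p}} → 0, we have Cap({x ∈ X : M^γ_𝓑 u_k(x) > λ}) → 0 as k → ∞; (3) for every quasicontinuous u ∈ M^{s,p}(X) there exists a set E with Cap(E) = 0 such that lim_{𝓑∋B→x} m^γ_u(B) = u(x) for every 0 < γ < 1 and every x ∈ X∖E. Then (1) implies (2), and (2) implies (3). -/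
open MeasureTheory Metric Filter Set Topology
open scoped ENNReal NNReal

/-- `g` is an `s`-gradient of `u`:
`|u(x) − u(y)| ≤ d(x,y)^s (g(x) + g(y))` for all `x, y` outside a null set. -/
def IsSGrad {X : Type*} [MetricSpace X] [MeasurableSpace X] (μ : Measure X) (s : ℝ)
    (u : X → ℝ) (g : X → ℝ≥0∞) : Prop :=
  Measurable g ∧ ∃ E : Set X, μ E = 0 ∧ ∀ x ∉ E, ∀ y ∉ E,
    ENNReal.ofReal |u x - u y| ≤ ENNReal.ofReal (dist x y ^ s) * (g x + g y)

/-- The Hajłasz norm `‖u‖_{M^{s,p}} = ‖u‖_{L^p} + inf_{g ∈ D^s(u)} ‖g‖_{L^p}`. -/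
noncomputable def hajNorm {X : Type*} [MetricSpace X] [MeasurableSpace X] (μ : Measure X)
    (s p : ℝ) (u : X → ℝ) : ℝ≥0∞ :=
  (∫⁻ x, ENNReal.ofReal |u x| ^ p ∂μ) ^ (1 / p) +
    ⨅ (g : X → ℝ≥0∞) (_ : IsSGrad μ s u g), (∫⁻ x, g x ^ p ∂μ) ^ (1 / p)

/-- `u ∈ M^{s,p}(X)`: the Hajłasz space. -/
def MemHaj {X : Type*} [MetricSpace X] [MeasurableSpace X] (μ : Measure X)
    (s p : ℝ) (u : X → ℝ) : Prop :=
  Measurable u ∧ hajNorm μ s p u < ⊤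

/-- The `M^{s,p}`-capacity: `Cap(E) = inf {‖u‖_{M^{s,p}}^p : u ≥ 1 on an open nbhd of E}`. -/
noncomputable def hCap {X : Type*} [MetricSpace X] [MeasurableSpace X] (μ : Measure X)
    (s p : ℝ) (E : Set X) : ℝ≥0∞ :=
  ⨅ (u : X → ℝ) (_ : MemHaj μ s p u)
    (_ : ∃ U : Set X, IsOpen U ∧ E ⊆ U ∧ ∀ x ∈ U, 1 ≤ u x),
    hajNorm μ s p u ^ p

/-- `u` is quasicontinuous w.r.t. the `M^{s,p}`-capacity. -/
def QuasiCont {X : Type*} [MetricSpace X] [MeasurableSpace X] (μ : Measure X)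
    (s p : ℝ) (u : X → ℝ) : Prop :=
  ∀ ε : ℝ, 0 < ε → ∃ F : Set X, hCap μ s p F < ENNReal.ofReal ε ∧ ContinuousOn u Fᶜ

/-!
Countable subadditivity of `Cap^{1/p}` drives both implications: a countable sum of admissible
functions, set to `1` on the null set where it diverges, is admissible for the union, and its
Hajłasz norm is at most the sum of the norms (Minkowski for series).

(1) ⇒ (2): if the capacities stayed above `ε` along a subsequence with `‖u_{k_j}‖ < 4⁻ʲ`, then
`W = ∑ 2ʲ |u_{k_j}|` lies in `M^{s,p}` and `{M u_{k_j} > λ} ⊆ {M W > 2ʲ λ}`, whose capacity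
tends to `0` by (1).

(2) ⇒ (3): quasicontinuity gives `v_i ≥ 1` on open sets `U_i` with `‖v_i‖ → 0` and `u`
continuous off `U_i`. By (2) the set `⋃ₘ ⋂ᵢ (U_i ∪ {M^{δₘ} v_i > 1/2})` has capacity zero.
Off it, for each `m` some `i` has `x ∉ U_i` and every basis set `B ∋ x` meets `U_i` in relative
measure `< δₘ`; a `γ`-median ignores such a set once `δₘ ≤ min γ (1 - γ)`, so the medians of `u`
over `B` converge to `u x` by continuity of `u` off `U_i`.
-/
theorem eLpNorm'_tsum_le {α ι : Type*} [MeasurableSpace α] {μ : Measure α} [Countable ι]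
    {f : ι → α → ℝ≥0∞} (hf : ∀ i, AEMeasurable (f i) μ) {q : ℝ} (hq : 1 ≤ q) :
    eLpNorm' (fun x => ∑' i, f i x) q μ ≤ ∑' i, eLpNorm' (f i) q μ := by
  have hq0 : 0 < q := zero_lt_one.trans_le hq
  set T := ∑' i, eLpNorm' (f i) q μ
  have hpartial : ∀ t : Finset ι, ∫⁻ x, (∑ i ∈ t, f i x) ^ q ∂μ ≤ T ^ q := by
    intro t
    calc ∫⁻ x, (∑ i ∈ t, f i x) ^ q ∂μ = eLpNorm' (∑ i ∈ t, f i) q μ ^ q := by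
          simp [eLpNorm', ← ENNReal.rpow_mul, hq0.ne']
      _ ≤ (∑ i ∈ t, eLpNorm' (f i) q μ) ^ q := by
          gcongr
          exact eLpNorm'_sum_le (fun i _ => (hf i).aestronglyMeasurable) hq
      _ ≤ T ^ q := by gcongr; exact ENNReal.sum_le_tsum t
  have hsup : ∀ x, (∑' i, f i x) ^ q = ⨆ t : Finset ι, (∑ i ∈ t, f i x) ^ q := fun x => by
    rw [ENNReal.tsum_eq_iSup_sum]
    exact Monotone.map_iSup_of_continuousAt ENNReal.continuous_rpow_const.continuousAt
      (ENNReal.monotone_rpow_of_nonneg hq0.le) (ENNReal.zero_rpow_of_pos hq0)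
  have hint : ∫⁻ x, (∑' i, f i x) ^ q ∂μ ≤ T ^ q := by
    simp_rw [hsup]
    rw [lintegral_iSup_directed (f := fun t x => (∑ i ∈ t, f i x) ^ q)
      (fun t => (Finset.aemeasurable_fun_sum t fun i _ => hf i).pow_const q)]
    · exact iSup_le hpartial
    · refine Monotone.directed_le fun t t' htt' x => ?_
      gcongr
  calc eLpNorm' (fun x => ∑' i, f i x) q μ = (∫⁻ x, (∑' i, f i x) ^ q ∂μ) ^ (1 / q) := by
        simp [eLpNorm']
    _ ≤ (T ^ q) ^ (1 / q) := by gcongr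
    _ = T := by rw [← ENNReal.rpow_mul, mul_one_div_cancel hq0.ne', ENNReal.rpow_one]

theorem eLpNorm'_tsum_ofReal_le {α ι : Type*} [MeasurableSpace α] {μ : Measure α} [Countable ι]
    {w : ι → α → ℝ} (hw : ∀ i, Measurable (w i)) {q : ℝ} (hq : 1 ≤ q) :
    eLpNorm' (fun x => ∑' i, ENNReal.ofReal (w i x)) q μ ≤ ∑' i, eLpNorm' (w i) q μ := by
  refine (eLpNorm'_tsum_le (fun i => (hw i).ennreal_ofReal.aemeasurable) hq).trans
    (ENNReal.tsum_le_tsum fun i => eLpNorm'_mono_enorm_ae (by linarith) (ae_of_all _ fun x => ?_))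
  rw [enorm_eq_self, Real.enorm_eq_ofReal_abs]
  exact ENNReal.ofReal_le_ofReal (le_abs_self _)

theorem ae_ne_top_of_eLpNorm'_ne_top {α : Type*} [MeasurableSpace α] {μ : Measure α}
    {f : α → ℝ≥0∞} (hf : AEMeasurable f μ) {q : ℝ} (hq : 0 < q) (h : eLpNorm' f q μ ≠ ⊤) :
    ∀ᵐ x ∂μ, f x ≠ ⊤ := by
  have hint := lintegral_rpow_enorm_lt_top_of_eLpNorm'_lt_top hq h.lt_top
  simp only [enorm_eq_self] at hint
  filter_upwards [ae_lt_top' (hf.pow_const q) hint.ne] with x hx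
  exact (ENNReal.rpow_eq_top_iff_of_pos hq).not.1 hx.ne

theorem ofReal_abs_toReal_tsum_sub_le {ι : Type*} {a b : ι → ℝ}
    (ha : ∑' i, ENNReal.ofReal (a i) ≠ ⊤) (hb : ∑' i, ENNReal.ofReal (b i) ≠ ⊤) :
    ENNReal.ofReal |(∑' i, ENNReal.ofReal (a i)).toReal - (∑' i, ENNReal.ofReal (b i)).toReal|
      ≤ ∑' i, ENNReal.ofReal |a i - b i| := by
  have key : ∀ a b : ι → ℝ, ∑' i, ENNReal.ofReal (a i)
      ≤ ∑' i, ENNReal.ofReal (b i) + ∑' i, ENNReal.ofReal |a i - b i| := fun a b => by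
    rw [← ENNReal.tsum_add]
    refine ENNReal.tsum_le_tsum fun i => ?_
    calc ENNReal.ofReal (a i) ≤ ENNReal.ofReal (b i + |a i - b i|) := by
          gcongr; linarith [le_abs_self (a i - b i)]
      _ ≤ _ := ENNReal.ofReal_add_le
  set C := ∑' i, ENNReal.ofReal |a i - b i|
  by_cases hC : C = ⊤
  · simp [hC]
  have hCba : ∑' i, ENNReal.ofReal |b i - a i| = C := by simp_rw [abs_sub_comm, C]
  have hab := ENNReal.toReal_mono (ENNReal.add_ne_top.2 ⟨hb, hC⟩) (key a b)
  have hba := ENNReal.toReal_mono (ENNReal.add_ne_top.2 ⟨ha, hC⟩) (hCba ▸ key b a)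
  rw [ENNReal.toReal_add hb hC] at hab
  rw [ENNReal.toReal_add ha hC] at hba
  exact ENNReal.ofReal_le_of_le_toReal (abs_sub_le_iff.2 ⟨by linarith, by linarith⟩)

section Hajlasz

variable {X : Type*} [MetricSpace X] [MeasurableSpace X] {μ : Measure X} {s p : ℝ}
  {u : X → ℝ} {g : X → ℝ≥0∞}

theorem hajNorm_eq (u : X → ℝ) :
    hajNorm μ s p u = eLpNorm' u p μ + ⨅ (g) (_ : IsSGrad μ s u g), eLpNorm' g p μ := by
  simp [hajNorm, eLpNorm', Real.enorm_eq_ofReal_abs]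

theorem hajNorm_le_of_isSGrad (hg : IsSGrad μ s u g) :
    hajNorm μ s p u ≤ eLpNorm' u p μ + eLpNorm' g p μ := by
  rw [hajNorm_eq]
  gcongr
  exact iInf₂_le g hg

theorem exists_isSGrad_add_lt {c : ℝ≥0∞} (h : hajNorm μ s p u < c) :
    ∃ g, IsSGrad μ s u g ∧ eLpNorm' u p μ + eLpNorm' g p μ < c := by
  simp_rw [hajNorm_eq, ENNReal.add_iInf, iInf_lt_iff, exists_prop] at h
  exact h

theorem IsSGrad.comp_lipschitzWith {φ : ℝ → ℝ} {K : ℝ≥0} (hφ : LipschitzWith K φ)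
    (hg : IsSGrad μ s u g) : IsSGrad μ s (fun x => φ (u x)) (fun x => K * g x) := by
  obtain ⟨hgm, E, hE, hu⟩ := hg
  refine ⟨measurable_const.mul hgm, E, hE, fun x hx y hy => ?_⟩
  calc ENNReal.ofReal |φ (u x) - φ (u y)| ≤ ENNReal.ofReal (K * |u x - u y|) := by
        gcongr
        simpa [Real.dist_eq] using hφ.dist_le_mul (u x) (u y)
    _ = K * ENNReal.ofReal |u x - u y| := by
        rw [ENNReal.ofReal_mul K.coe_nonneg, ENNReal.ofReal_coe_nnreal]
    _ ≤ K * (ENNReal.ofReal (dist x y ^ s) * (g x + g y)) := by gcongr; exact hu x hx y hy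
    _ = ENNReal.ofReal (dist x y ^ s) * (K * g x + K * g y) := by ring

theorem isSGrad_of_ae_eq_toReal_tsum {ι : Type*} [Countable ι] {w : ι → X → ℝ}
    {g : ι → X → ℝ≥0∞} (hg : ∀ i, IsSGrad μ s (w i) (g i)) {W : X → ℝ}
    (hW : ∀ᵐ x ∂μ, ∑' i, ENNReal.ofReal (w i x) ≠ ⊤ ∧
      W x = (∑' i, ENNReal.ofReal (w i x)).toReal) :
    IsSGrad μ s W (fun x => ∑' i, g i x) := by
  choose E hE hEg using fun i => (hg i).2
  refine ⟨Measurable.tsum fun i => (hg i).1, {x | ¬ (_ ∧ _)} ∪ ⋃ i, E i,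
    measure_union_null (ae_iff.1 hW) (measure_iUnion_null hE), fun x hx y hy => ?_⟩
  simp only [mem_union, mem_ofPred_eq, mem_iUnion, not_or, not_exists, not_not] at hx hy
  rw [hx.1.2, hy.1.2]
  calc _ ≤ ∑' i, ENNReal.ofReal |w i x - w i y| := ofReal_abs_toReal_tsum_sub_le hx.1.1 hy.1.1
    _ ≤ ∑' i, ENNReal.ofReal (dist x y ^ s) * (g i x + g i y) :=
        ENNReal.tsum_le_tsum fun i => hEg i x (hx.2 i) y (hy.2 i)
    _ = ENNReal.ofReal (dist x y ^ s) * ((∑' i, g i x) + ∑' i, g i y) := by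
        rw [ENNReal.tsum_mul_left, ENNReal.tsum_add]

theorem exists_memHaj_ge_of_tsum_ne_top (hp : 1 ≤ p) {ι : Type*} [Countable ι]
    {w : ι → X → ℝ} {g : ι → X → ℝ≥0∞} (hw : ∀ i, Measurable (w i))
    (hg : ∀ i, IsSGrad μ s (w i) (g i))
    (hsum : ∑' i, (eLpNorm' (w i) p μ + eLpNorm' (g i) p μ) ≠ ⊤) :
    ∃ W, MemHaj μ s p W ∧
      hajNorm μ s p W ≤ ∑' i, (eLpNorm' (w i) p μ + eLpNorm' (g i) p μ) ∧
      (∀ x i, min 1 (w i x) ≤ W x) ∧ ∀ᵐ x ∂μ, ∀ i, w i x ≤ W x := by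
  have hp0 : 0 < p := zero_lt_one.trans_le hp
  set S : X → ℝ≥0∞ := fun x => ∑' i, ENNReal.ofReal (w i x)
  set G : X → ℝ≥0∞ := fun x => ∑' i, g i x
  have hSm : Measurable S := Measurable.tsum fun i => (hw i).ennreal_ofReal
  have hS : eLpNorm' S p μ ≤ ∑' i, eLpNorm' (w i) p μ := eLpNorm'_tsum_ofReal_le hw hp
  have hG : eLpNorm' G p μ ≤ ∑' i, eLpNorm' (g i) p μ :=
    eLpNorm'_tsum_le (fun i => (hg i).1.aemeasurable) hp
  rw [ENNReal.tsum_add] at hsum ⊢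
  have hSfin : ∀ᵐ x ∂μ, S x ≠ ⊤ := ae_ne_top_of_eLpNorm'_ne_top hSm.aemeasurable hp0
    (ne_top_of_le_ne_top (ENNReal.add_ne_top.1 hsum).1 hS)
  -- On the null set where the series diverges, `W = 1` keeps `W ≥ 1` wherever some `w i ≥ 1`.
  set W : X → ℝ := fun x => if S x = ⊤ then 1 else (S x).toReal
  have hWS : ∀ x, S x ≠ ⊤ → W x = (S x).toReal := fun x hx => if_neg hx
  have hwW : ∀ x, S x ≠ ⊤ → ∀ i, w i x ≤ W x := fun x hx i => by
    rw [hWS x hx]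
    calc w i x ≤ (ENNReal.ofReal (w i x)).toReal := by
          rw [ENNReal.toReal_ofReal']; exact le_max_left _ _
      _ ≤ (S x).toReal := ENNReal.toReal_mono hx (ENNReal.le_tsum i)
  have hgrad : IsSGrad μ s W G :=
    isSGrad_of_ae_eq_toReal_tsum hg (hSfin.mono fun x hx => ⟨hx, hWS x hx⟩)
  have hW : eLpNorm' W p μ ≤ eLpNorm' S p μ := by
    refine eLpNorm'_mono_enorm_ae hp0.le (ae_of_all _ fun x => ?_)
    rw [enorm_eq_self]
    by_cases hx : S x = ⊤
    · rw [hx]; exact le_top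
    · rw [hWS x hx, Real.enorm_eq_ofReal_abs, abs_of_nonneg ENNReal.toReal_nonneg,
        ENNReal.ofReal_toReal hx]
  have hnorm := (hajNorm_le_of_isSGrad hgrad).trans (add_le_add (hW.trans hS) hG)
  refine ⟨W, ⟨?_, hnorm.trans_lt hsum.lt_top⟩, hnorm, fun x i => ?_,
    hSfin.mono fun x hx => hwW x hx⟩
  · exact Measurable.ite (hSm (measurableSet_singleton ⊤)) measurable_const
      (ENNReal.measurable_toReal.comp hSm)
  · by_cases hx : S x = ⊤
    · simp only [W, if_pos hx]; exact min_le_left _ _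
    · exact (min_le_right _ _).trans (hwW x hx i)

theorem exists_memHaj_ae_const_mul_abs_le (hp : 1 ≤ p) {ι : Type*} [Countable ι]
    {u : ι → X → ℝ} (hu : ∀ i, MemHaj μ s p (u i)) {c : ι → ℝ≥0} {b : ι → ℝ≥0∞}
    (hb : ∀ i, hajNorm μ s p (u i) < b i) (hsum : ∑' i, (c i : ℝ≥0∞) * b i ≠ ⊤) :
    ∃ W, MemHaj μ s p W ∧ ∀ᵐ x ∂μ, ∀ i, (c i : ℝ) * |u i x| ≤ W x := by
  have hp0 : 0 < p := zero_lt_one.trans_le hp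
  choose g hg hgb using fun i => exists_isSGrad_add_lt (hb i)
  have hlip : ∀ i, LipschitzWith (c i) fun t : ℝ => (c i : ℝ) * |t| := fun i =>
    LipschitzWith.of_dist_le_mul fun a b => by
      rw [Real.dist_eq, Real.dist_eq, ← mul_sub, abs_mul, NNReal.abs_eq]
      exact mul_le_mul_of_nonneg_left (abs_abs_sub_abs_le_abs_sub a b) (c i).coe_nonneg
  have hbound : ∀ i, eLpNorm' (fun x => (c i : ℝ) * |u i x|) p μ
      + eLpNorm' (fun x => (c i : ℝ≥0∞) * g i x) p μ ≤ c i * b i := fun i =>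
    calc _ ≤ c i * eLpNorm' (u i) p μ + c i * eLpNorm' (g i) p μ := by
          gcongr
          · refine eLpNorm'_le_mul_eLpNorm'_of_ae_le_mul (hu i).1.aestronglyMeasurable
              (ae_of_all _ fun x => le_of_eq ?_) hp0
            rw [Real.enorm_eq_ofReal_abs, Real.enorm_eq_ofReal_abs, abs_mul, abs_abs,
              NNReal.abs_eq, ENNReal.ofReal_mul (c i).coe_nonneg, ENNReal.ofReal_coe_nnreal]
          · exact eLpNorm'_le_mul_eLpNorm'_of_ae_le_mul (hg i).1.aestronglyMeasurable
              (ae_of_all _ fun x => le_rfl) hp0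
      _ = c i * (eLpNorm' (u i) p μ + eLpNorm' (g i) p μ) := by ring
      _ ≤ c i * b i := by gcongr; exact (hgb i).le
  obtain ⟨W, hW, -, -, hWge⟩ := exists_memHaj_ge_of_tsum_ne_top hp
    (fun i => measurable_const.mul (hu i).1.abs)
    (fun i => (hg i).comp_lipschitzWith (φ := fun t => (c i : ℝ) * |t|) (hlip i))
    (ne_top_of_le_ne_top hsum (ENNReal.tsum_le_tsum hbound))
  exact ⟨W, hW, hWge⟩

end Hajlasz

section Capacity

variable {X : Type*} [MetricSpace X] [MeasurableSpace X] {μ : Measure X} {s p : ℝ}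
  {E F U : Set X} {v : X → ℝ}

theorem hCap_le_hajNorm_rpow (hv : MemHaj μ s p v) (hU : IsOpen U) (hEU : E ⊆ U)
    (h1 : ∀ x ∈ U, 1 ≤ v x) :
    hCap μ s p E ≤ hajNorm μ s p v ^ p :=
  iInf_le_of_le v (iInf_le_of_le hv (iInf_le_of_le ⟨U, hU, hEU, h1⟩ le_rfl))

theorem hCap_mono (h : E ⊆ F) : hCap μ s p E ≤ hCap μ s p F :=
  le_iInf₂ fun _ hv => le_iInf fun ⟨_, hU, hFU, h1⟩ =>
    hCap_le_hajNorm_rpow hv hU (h.trans hFU) h1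

theorem exists_memHaj_of_hCap_lt {c : ℝ≥0∞} (h : hCap μ s p E < c) :
    ∃ v U, MemHaj μ s p v ∧ IsOpen U ∧ E ⊆ U ∧ (∀ x ∈ U, 1 ≤ v x) ∧ hajNorm μ s p v ^ p < c := by
  simp only [hCap, iInf_lt_iff, exists_prop] at h
  obtain ⟨v, hv, ⟨U, hU, hEU, h1⟩, hlt⟩ := h
  exact ⟨v, U, hv, hU, hEU, h1, hlt⟩

theorem exists_isSGrad_of_hCap_rpow_lt (hp : 0 < p) {c : ℝ≥0∞} (h : hCap μ s p E ^ p⁻¹ < c) :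
    ∃ v g U, Measurable v ∧ IsSGrad μ s v g ∧ IsOpen U ∧ E ⊆ U ∧ (∀ x ∈ U, 1 ≤ v x) ∧
      eLpNorm' v p μ + eLpNorm' g p μ < c := by
  obtain ⟨v, U, hv, hU, hEU, h1, hlt⟩ :=
    exists_memHaj_of_hCap_lt ((ENNReal.rpow_inv_lt_iff hp).1 h)
  obtain ⟨g, hg, hvg⟩ := exists_isSGrad_add_lt ((ENNReal.rpow_lt_rpow_iff hp).1 hlt)
  exact ⟨v, g, U, hv.1, hg, hU, hEU, h1, hvg⟩

theorem hCap_iUnion_rpow_le (hp : 1 ≤ p) {ι : Type*} [Countable ι] (E : ι → Set X) :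
    hCap μ s p (⋃ i, E i) ^ p⁻¹ ≤ ∑' i, hCap μ s p (E i) ^ p⁻¹ := by
  have hp0 : 0 < p := zero_lt_one.trans_le hp
  refine ENNReal.le_of_forall_pos_le_add fun ε hε hfin => ?_
  obtain ⟨ε', hε'0, hε'⟩ := ENNReal.exists_pos_sum_of_countable (ENNReal.coe_ne_zero.2 hε.ne') ι
  have hlt : ∀ i, hCap μ s p (E i) ^ p⁻¹ < hCap μ s p (E i) ^ p⁻¹ + ε' i := fun i =>
    ENNReal.lt_add_right (ne_top_of_le_ne_top hfin.ne (ENNReal.le_tsum i))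
      (ENNReal.coe_ne_zero.2 (hε'0 i).ne')
  choose v g U hv hg hU hEU h1 hvg using fun i => exists_isSGrad_of_hCap_rpow_lt hp0 (hlt i)
  have hsum : ∑' i, (eLpNorm' (v i) p μ + eLpNorm' (g i) p μ)
      ≤ ∑' i, hCap μ s p (E i) ^ p⁻¹ + ε :=
    calc _ ≤ ∑' i, (hCap μ s p (E i) ^ p⁻¹ + ε' i) := ENNReal.tsum_le_tsum fun i => (hvg i).le
      _ ≤ ∑' i, hCap μ s p (E i) ^ p⁻¹ + ε := by
          rw [ENNReal.tsum_add]; gcongr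
  obtain ⟨W, hW, hWnorm, hWge, -⟩ := exists_memHaj_ge_of_tsum_ne_top hp hv hg
    (ne_top_of_le_ne_top (ENNReal.add_ne_top.2 ⟨hfin.ne, ENNReal.coe_ne_top⟩) hsum)
  have hcap : hCap μ s p (⋃ i, E i) ≤ hajNorm μ s p W ^ p := by
    refine hCap_le_hajNorm_rpow hW (isOpen_iUnion hU) (iUnion_mono hEU) fun x hx => ?_
    obtain ⟨i, hi⟩ := mem_iUnion.1 hx
    simpa [h1 i x hi] using hWge x i
  calc hCap μ s p (⋃ i, E i) ^ p⁻¹ ≤ hajNorm μ s p W :=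
        (ENNReal.rpow_inv_le_iff hp0).2 hcap
    _ ≤ _ := hWnorm.trans hsum

theorem hCap_union_rpow_le (hp : 1 ≤ p) (E F : Set X) :
    hCap μ s p (E ∪ F) ^ p⁻¹ ≤ hCap μ s p E ^ p⁻¹ + hCap μ s p F ^ p⁻¹ := by
  simpa [union_eq_iUnion, tsum_bool, add_comm] using
    hCap_iUnion_rpow_le (μ := μ) (s := s) hp fun b => cond b E F

theorem hCap_iUnion_eq_zero (hp : 1 ≤ p) {ι : Type*} [Countable ι] {E : ι → Set X}
    (h : ∀ i, hCap μ s p (E i) = 0) : hCap μ s p (⋃ i, E i) = 0 := by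
  have hp0 : 0 < p := zero_lt_one.trans_le hp
  have h0 := hCap_iUnion_rpow_le (μ := μ) (s := s) hp E
  simp only [h, ENNReal.zero_rpow_of_pos (inv_pos.2 hp0), tsum_zero, nonpos_iff_eq_zero] at h0
  exact (ENNReal.rpow_eq_zero_iff_of_pos (inv_pos.2 hp0)).1 h0

theorem hCap_iInter_union_eq_zero (hp : 1 ≤ p) {E F : ℕ → Set X}
    (hE : Tendsto (fun i => hCap μ s p (E i)) atTop (𝓝 0))
    (hF : Tendsto (fun i => hCap μ s p (F i)) atTop (𝓝 0)) :
    hCap μ s p (⋂ i, E i ∪ F i) = 0 := by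
  have hp0 : 0 < p⁻¹ := inv_pos.2 (zero_lt_one.trans_le hp)
  have hlim := (hE.ennrpow_const p⁻¹).add (hF.ennrpow_const p⁻¹)
  rw [ENNReal.zero_rpow_of_pos hp0, add_zero] at hlim
  have hle : ∀ i, hCap μ s p (⋂ i, E i ∪ F i) ^ p⁻¹
      ≤ hCap μ s p (E i) ^ p⁻¹ + hCap μ s p (F i) ^ p⁻¹ := fun i =>
    (ENNReal.rpow_le_rpow (hCap_mono (iInter_subset _ i)) hp0.le).trans
      (hCap_union_rpow_le hp _ _)
  exact (ENNReal.rpow_eq_zero_iff_of_pos hp0).1 (nonpos_iff_eq_zero.1 (ge_of_tendsto' hlim hle))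

end Capacity

section Median

open scoped Pointwise

variable {X : Type*} [MeasurableSpace X] {μ : Measure X} {w w' : X → ℝ} {B U : Set X}
  {γ δ : ℝ}

def medianSet (μ : Measure X) (w : X → ℝ) (B : Set X) (γ : ℝ) : Set ℝ :=
  {a | μ {x ∈ B | a < w x} < ENNReal.ofReal γ * μ B}

noncomputable def realMed (μ : Measure X) (w : X → ℝ) (B : Set X) (γ : ℝ) : ℝ :=
  sInf (medianSet μ w B γ)

theorem med_coe (μ : Measure X) (w : X → ℝ) (B : Set X) (γ : ℝ) :
    med μ (fun x => (w x : EReal)) B γ = realMed μ w B γ := by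
  simp [med, realMed, medianSet, EReal.coe_lt_coe_iff]

theorem bddBelow_medianSet (hγ : γ < 1) (hB0 : μ B ≠ 0) (hBtop : μ B ≠ ⊤) :
    BddBelow (medianSet μ w B γ) := by
  have hlt : ENNReal.ofReal γ * μ B < μ B := by
    simpa using ENNReal.mul_lt_mul_left hB0 hBtop (ENNReal.ofReal_lt_one.2 hγ)
  set T : ℕ → Set X := fun n => {x ∈ B | -(n : ℝ) < w x}
  have hT : Monotone T := fun m n hmn x hx => by
    have : (m : ℝ) ≤ n := by exact_mod_cast hmn
    exact ⟨hx.1, by linarith [hx.2]⟩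
  have hTB : ⋃ n, T n = B := by
    ext x
    simp only [T, mem_iUnion, mem_sep_iff, exists_and_left, and_iff_left_iff_imp]
    exact fun _ => (exists_nat_gt (-w x)).imp fun n hn => by linarith
  have hlim := tendsto_measure_iUnion_atTop (μ := μ) hT
  rw [hTB] at hlim
  obtain ⟨n, hn⟩ := (hlim.eventually_const_lt hlt).exists
  refine ⟨-n, fun a ha => not_lt.1 fun han => ?_⟩
  have hsub : T n ⊆ {x ∈ B | a < w x} := fun x hx => ⟨hx.1, han.trans hx.2⟩
  exact lt_asymm ha (hn.trans_le (measure_mono hsub))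

theorem nonempty_medianSet (hw : Measurable w) (hB : MeasurableSet B) (hB0 : μ B ≠ 0)
    (hBtop : μ B ≠ ⊤) (hγ : 0 < γ) : (medianSet μ w B γ).Nonempty := by
  have hpos : 0 < ENNReal.ofReal γ * μ B := ENNReal.mul_pos (ENNReal.ofReal_pos.2 hγ).ne' hB0
  set T : ℕ → Set X := fun n => {x ∈ B | (n : ℝ) < w x}
  have hT : Antitone T := fun m n hmn x hx => by
    have : (m : ℝ) ≤ n := by exact_mod_cast hmn
    exact ⟨hx.1, by linarith [hx.2]⟩
  have hT0 : ⋂ n, T n = ∅ := by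
    ext x
    simp only [T, mem_iInter, mem_sep_iff, mem_empty_iff_false, iff_false, not_forall]
    obtain ⟨n, hn⟩ := exists_nat_ge (w x)
    exact ⟨n, fun h => (h.2.trans_le hn).false⟩
  have hlim := tendsto_measure_iInter_atTop (μ := μ) (s := T)
    (fun n => (hB.inter (measurableSet_lt measurable_const hw)).nullMeasurableSet) hT
    ⟨0, ne_top_of_le_ne_top hBtop (measure_mono fun x hx => hx.1)⟩
  rw [hT0, measure_empty] at hlim
  obtain ⟨n, hn⟩ := (hlim.eventually_lt_const hpos).exists
  exact ⟨n, hn⟩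

theorem realMed_le (hγ : γ < 1) (hB0 : μ B ≠ 0) (hBtop : μ B ≠ ⊤) {a : ℝ}
    (h : μ {x ∈ B | a < w x} < ENNReal.ofReal γ * μ B) : realMed μ w B γ ≤ a :=
  csInf_le (bddBelow_medianSet hγ hB0 hBtop) h

theorem le_realMed (hw : Measurable w) (hB : MeasurableSet B) (hB0 : μ B ≠ 0)
    (hBtop : μ B ≠ ⊤) (hγ : 0 < γ) {b : ℝ}
    (h : ∀ a < b, ENNReal.ofReal γ * μ B ≤ μ {x ∈ B | a < w x}) : b ≤ realMed μ w B γ :=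
  le_csInf (nonempty_medianSet hw hB hB0 hBtop hγ) fun a ha =>
    not_lt.1 fun hab => (h a hab).not_gt ha

theorem realMed_mono (hw' : Measurable w') (hB : MeasurableSet B) (hB0 : μ B ≠ 0)
    (hBtop : μ B ≠ ⊤) (hγ0 : 0 < γ) (hγ1 : γ < 1) (h : w ≤ᵐ[μ] w') :
    realMed μ w B γ ≤ realMed μ w' B γ := by
  refine csInf_le_csInf (bddBelow_medianSet hγ1 hB0 hBtop)
    (nonempty_medianSet hw' hB hB0 hBtop hγ0) fun a ha => ?_
  refine (measure_mono_ae ?_).trans_lt (show _ < _ from ha)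
  filter_upwards [h] with x hx hmem
  exact ⟨hmem.1, hmem.2.trans_le hx⟩

theorem realMed_const_mul {c : ℝ} (hc : 0 < c) :
    realMed μ (fun x => c * w x) B γ = c * realMed μ w B γ := by
  have hset : medianSet μ (fun x => c * w x) B γ = c • medianSet μ w B γ := by
    ext a
    simp only [mem_smul_set_iff_inv_smul_mem₀ hc.ne', smul_eq_mul, medianSet, mem_ofPred_eq,
      ← inv_mul_lt_iff₀ hc]
  rw [realMed, realMed, hset, Real.sInf_smul_of_nonneg hc.le, smul_eq_mul]

theorem measure_inter_lt_of_realMed_lt_one (hw : Measurable w) (hB : MeasurableSet B)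
    (hB0 : μ B ≠ 0) (hBtop : μ B ≠ ⊤) (hδ : 0 < δ) (hU : ∀ x ∈ U, 1 ≤ w x)
    (hmed : realMed μ w B δ < 1) : μ (B ∩ U) < ENNReal.ofReal δ * μ B := by
  by_contra! h
  refine hmed.not_ge (le_realMed hw hB hB0 hBtop hδ fun a ha => h.trans (measure_mono ?_))
  exact fun x hx => ⟨hx.1, ha.trans_le (hU x hx.2)⟩

theorem abs_realMed_sub_le {u : X → ℝ} {L η : ℝ} (hu : Measurable u) (hB : MeasurableSet B)
    (hB0 : μ B ≠ 0) (hBtop : μ B ≠ ⊤) (hδ : 0 < δ) (hδγ : δ ≤ γ) (hγδ : γ + δ ≤ 1)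
    (hsmall : μ (B ∩ U) < ENNReal.ofReal δ * μ B) (hclose : ∀ x ∈ B \ U, |u x - L| ≤ η) :
    |realMed μ u B γ - L| ≤ η := by
  have hγ0 : 0 < γ := hδ.trans_le hδγ
  have hupper : realMed μ u B γ ≤ L + η := by
    refine realMed_le (by linarith) hB0 hBtop ((measure_mono fun x hx => ?_).trans_lt
      (hsmall.trans_le (by gcongr)))
    refine ⟨hx.1, by_contra fun hxU => ?_⟩
    linarith [hx.2, (abs_le.1 (hclose x ⟨hx.1, hxU⟩)).2]
  have hlower : L - η ≤ realMed μ u B γ := by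
    refine le_realMed hu hB hB0 hBtop hγ0 fun a ha => ?_
    have hdiff : ENNReal.ofReal γ * μ B ≤ μ (B \ U) := by
      by_contra! hlt
      have htot : ENNReal.ofReal γ * μ B + ENNReal.ofReal δ * μ B ≤ μ B := by
        rw [← add_mul, ← ENNReal.ofReal_add hγ0.le hδ.le]
        exact mul_le_of_le_one_left' (ENNReal.ofReal_le_one.2 hγδ)
      exact (htot.trans (measure_le_inter_add_sdiff μ B U)).not_gt
        (by rw [add_comm (ENNReal.ofReal γ * μ B)]; exact ENNReal.add_lt_add hsmall hlt)
    refine hdiff.trans (measure_mono fun x hx => ⟨hx.1, ?_⟩)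
    linarith [(abs_le.1 (hclose x hx)).1]
  rw [abs_le]
  constructor <;> linarith

end Median

section Basis

variable {X : Type*} [MetricSpace X] [MeasurableSpace X] {μ : Measure X}
  {𝓑 : X → Set (Set X)} {u : X → ℝ} {x : X} {γ : ℝ}

theorem IsDiffBasis.measure_lt_top (h𝓑 : IsDiffBasis μ 𝓑)
    (hfin : ∀ (x : X) (r : ℝ), 0 < r → μ (ball x r) < ⊤) {B : Set X} (hB : B ∈ 𝓑 x) :
    μ B < ⊤ := by
  obtain ⟨r, hr⟩ := (h𝓑.bounded x B hB).subset_ball x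
  have hr0 : 0 < r := by simpa using hr (h𝓑.mem_of x B hB)
  exact (measure_mono hr).trans_lt (hfin x r hr0)

theorem lt_medMax_iff {lam : ℝ} :
    (lam : EReal) < medMax μ 𝓑 (fun z => (u z : EReal)) γ x ↔
      ∃ B, (∃ y, B ∈ 𝓑 y) ∧ x ∈ B ∧ lam < realMed μ (fun z => |u z|) B γ := by
  have habs : ∀ B, med μ (fun z => max (u z : EReal) (-(u z : EReal))) B γ =
      realMed μ (fun z => |u z|) B γ := fun B => by
    rw [← med_coe]
    simp_rw [abs_eq_max_neg, EReal.coe_strictMono.monotone.map_max, EReal.coe_neg]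
  simp only [medMax, lt_iSup_iff, habs, EReal.coe_lt_coe_iff, exists_prop]

theorem basisLim_med_of_measure_inter_lt (h𝓑 : IsDiffBasis μ 𝓑)
    (hfin : ∀ (x : X) (r : ℝ), 0 < r → μ (ball x r) < ⊤) (hu : Measurable u) {U : Set X}
    (hcont : ContinuousWithinAt u Uᶜ x) {δ : ℝ} (hδ : 0 < δ) (hδγ : δ ≤ γ) (hγδ : γ + δ ≤ 1)
    (hsmall : ∀ B ∈ 𝓑 x, μ (B ∩ U) < ENNReal.ofReal δ * μ B) :
    BasisLim 𝓑 x (fun B => med μ (fun z => (u z : EReal)) B γ) (u x) := by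
  intro ε hε
  obtain ⟨r, hr, hur⟩ := Metric.continuousWithinAt_iff.1 hcont (ε / 2) (half_pos hε)
  refine ⟨r, hr, fun B hB hdiam => ?_⟩
  have hclose : ∀ z ∈ B \ U, |u z - u x| ≤ ε / 2 := fun z hz => by
    have hzx : dist z x < r :=
      (dist_le_diam_of_mem (h𝓑.bounded x B hB) hz.1 (h𝓑.mem_of x B hB)).trans_lt hdiam
    simpa [Real.dist_eq] using (hur hz.2 hzx).le
  show |med μ (fun z => (u z : EReal)) B γ - u x| < ε
  rw [med_coe]
  exact (abs_realMed_sub_le hu (h𝓑.measurableSet x B hB) (h𝓑.pos x B hB).ne'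
    (h𝓑.measure_lt_top hfin hB).ne hδ hδγ hγδ (hsmall B hB) hclose).trans_lt (half_lt_self hε)

end Basis

section Implications

variable {X : Type*} [MetricSpace X] [MeasurableSpace X] {μ : Measure X} {s p : ℝ}
  {𝓑 : X → Set (Set X)} {γ : ℝ}

theorem setOf_lt_medMax_subset (h𝓑 : IsDiffBasis μ 𝓑)
    (hfin : ∀ (x : X) (r : ℝ), 0 < r → μ (ball x r) < ⊤) (hγ0 : 0 < γ) (hγ1 : γ < 1)
    {u W : X → ℝ} (hW : Measurable W) {c : ℝ} (hc : 0 < c) (h : ∀ᵐ x ∂μ, c * |u x| ≤ W x)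
    (lam : ℝ) :
    {x | (lam : EReal) < medMax μ 𝓑 (fun z => (u z : EReal)) γ x} ⊆
      {x | ((c * lam : ℝ) : EReal) < medMax μ 𝓑 (fun z => (W z : EReal)) γ x} := by
  intro x hx
  simp only [mem_ofPred_eq, lt_medMax_iff] at hx ⊢
  obtain ⟨B, ⟨y, hB⟩, hxB, hlt⟩ := hx
  refine ⟨B, ⟨y, hB⟩, hxB, ?_⟩
  calc c * lam < c * realMed μ (fun z => |u z|) B γ := mul_lt_mul_of_pos_left hlt hc
    _ = realMed μ (fun z => c * |u z|) B γ := (realMed_const_mul hc).symm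
    _ ≤ realMed μ (fun z => |W z|) B γ :=
        realMed_mono hW.abs (h𝓑.measurableSet y B hB) (h𝓑.pos y B hB).ne'
          (h𝓑.measure_lt_top hfin hB).ne hγ0 hγ1 (h.mono fun z hz => hz.trans (le_abs_self _))

theorem tendsto_hCap_setOf_lt_medMax (hp : 1 ≤ p) (h𝓑 : IsDiffBasis μ 𝓑)
    (hfin : ∀ (x : X) (r : ℝ), 0 < r → μ (ball x r) < ⊤) (hγ0 : 0 < γ) (hγ1 : γ < 1)
    (h1 : ∀ u : X → ℝ, MemHaj μ s p u → Tendsto (fun t : ℝ =>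
      hCap μ s p {x | (t : EReal) < medMax μ 𝓑 (fun z => (u z : EReal)) γ x}) atTop (𝓝 0))
    {lam : ℝ} (hlam : 0 < lam) {uk : ℕ → X → ℝ} (hmem : ∀ k, MemHaj μ s p (uk k))
    (hnorm : Tendsto (fun k => hajNorm μ s p (uk k)) atTop (𝓝 0)) :
    Tendsto (fun k =>
      hCap μ s p {x | (lam : EReal) < medMax μ 𝓑 (fun z => (uk k z : EReal)) γ x})
      atTop (𝓝 0) := by
  rw [ENNReal.tendsto_nhds_zero]
  intro ε hε
  by_contra hev
  choose k hkε hk using fun j : ℕ => ((not_eventually.1 hev).and_eventually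
    (hnorm.eventually_lt_const (ENNReal.pow_pos (by norm_num : (0 : ℝ≥0∞) < 4⁻¹) j))).exists
  have hsum : ∑' j : ℕ, ((2 ^ j : ℝ≥0) : ℝ≥0∞) * 4⁻¹ ^ j ≠ ⊤ := by
    have h24 : (2 : ℝ≥0∞) * 4⁻¹ = 2⁻¹ := by
      rw [show (4 : ℝ≥0∞) = 2 * 2 by norm_num, ENNReal.mul_inv (by simp) (by simp), ← mul_assoc,
        ENNReal.mul_inv_cancel (by simp) (by simp), one_mul]
    simp_rw [ENNReal.coe_pow, ENNReal.coe_ofNat, ← mul_pow, h24, ENNReal.tsum_geometric_two]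
    exact ENNReal.ofNat_ne_top
  obtain ⟨W, hW, hWge⟩ := exists_memHaj_ae_const_mul_abs_le hp (fun j => hmem (k j)) hk hsum
  have hlim : Tendsto (fun j : ℕ => ((2 ^ j : ℝ≥0) : ℝ) * lam) atTop atTop := by
    push_cast
    exact (tendsto_pow_atTop_atTop_of_one_lt one_lt_two).atTop_mul_const hlam
  obtain ⟨j, hj⟩ := (hlim.eventually ((h1 W hW).eventually_lt_const hε)).exists
  exact hkε j ((hCap_mono (setOf_lt_medMax_subset h𝓑 hfin hγ0 hγ1 hW.1 (by positivity)
    (hWge.mono fun x hx => hx j) lam)).trans hj.le)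

theorem QuasiCont.exists_tendsto_hajNorm (hp : 0 < p) {u : X → ℝ} (hu : QuasiCont μ s p u) :
    ∃ (v : ℕ → X → ℝ) (U : ℕ → Set X), (∀ i, MemHaj μ s p (v i)) ∧ (∀ i, IsOpen (U i)) ∧
      (∀ i, ∀ x ∈ U i, 1 ≤ v i x) ∧ (∀ i, ContinuousOn u (U i)ᶜ) ∧
      Tendsto (fun i => hajNorm μ s p (v i)) atTop (𝓝 0) := by
  have hex : ∀ i : ℕ, ∃ v U, MemHaj μ s p v ∧ IsOpen U ∧ (∀ x ∈ U, 1 ≤ v x) ∧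
      ContinuousOn u Uᶜ ∧ hajNorm μ s p v < ENNReal.ofReal (1 / ((i : ℝ) + 1)) := fun i => by
    obtain ⟨F, hF, hFu⟩ := hu ((1 / ((i : ℝ) + 1)) ^ p) (by positivity)
    rw [← ENNReal.ofReal_rpow_of_nonneg (by positivity) hp.le] at hF
    obtain ⟨v, U, hv, hU, hFU, h1, hvlt⟩ := exists_memHaj_of_hCap_lt hF
    exact ⟨v, U, hv, hU, h1, hFu.mono (compl_subset_compl.2 hFU),
      (ENNReal.rpow_lt_rpow_iff hp).1 hvlt⟩
  choose v U hv hU h1 hcont hlt using hex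
  refine ⟨v, U, hv, hU, h1, hcont, tendsto_of_tendsto_of_tendsto_of_le_of_le tendsto_const_nhds
    ?_ (fun _ => zero_le) fun i => (hlt i).le⟩
  simpa using ENNReal.tendsto_ofReal tendsto_one_div_add_atTop_nhds_zero_nat

theorem exists_hCap_eq_zero_basisLim_med (hp : 1 ≤ p) (h𝓑 : IsDiffBasis μ 𝓑)
    (hfin : ∀ (x : X) (r : ℝ), 0 < r → μ (ball x r) < ⊤)
    (h2 : ∀ δ : ℝ, 0 < δ → δ < 1 → ∀ lam : ℝ, 0 < lam →
      ∀ v : ℕ → X → ℝ, (∀ i, MemHaj μ s p (v i)) →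
        Tendsto (fun i => hajNorm μ s p (v i)) atTop (𝓝 0) →
        Tendsto (fun i =>
          hCap μ s p {x | (lam : EReal) < medMax μ 𝓑 (fun z => (v i z : EReal)) δ x})
          atTop (𝓝 0))
    {u : X → ℝ} (hu : Measurable u) (hqc : QuasiCont μ s p u) :
    ∃ E : Set X, hCap μ s p E = 0 ∧ ∀ x ∉ E, ∀ γ : ℝ, 0 < γ → γ < 1 →
      BasisLim 𝓑 x (fun B => med μ (fun z => (u z : EReal)) B γ) (u x) := by
  have hp0 : 0 < p := zero_lt_one.trans_le hp
  obtain ⟨v, U, hv, hU, hvU, hcont, hvlim⟩ := hqc.exists_tendsto_hajNorm hp0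
  set δ : ℕ → ℝ := fun m => 1 / ((m : ℝ) + 2)
  have hδ0 : ∀ m, 0 < δ m := fun m => by positivity
  have hδ1 : ∀ m, δ m < 1 := fun m =>
    (div_lt_one (by positivity)).2 (by linarith [m.cast_nonneg (α := ℝ)])
  set A : ℕ → ℕ → Set X := fun m i =>
    {x | ((1 / 2 : ℝ) : EReal) < medMax μ 𝓑 (fun z => (v i z : EReal)) (δ m) x}
  have hUcap : Tendsto (fun i => hCap μ s p (U i)) atTop (𝓝 0) := by
    refine tendsto_of_tendsto_of_tendsto_of_le_of_le tendsto_const_nhds ?_ (fun _ => zero_le)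
      fun i => hCap_le_hajNorm_rpow (hv i) (hU i) subset_rfl (hvU i)
    simpa [ENNReal.zero_rpow_of_pos hp0] using hvlim.ennrpow_const p
  have hnull : ∀ m, hCap μ s p (⋂ i, U i ∪ A m i) = 0 := fun m =>
    hCap_iInter_union_eq_zero hp hUcap (h2 (δ m) (hδ0 m) (hδ1 m) (1 / 2) one_half_pos v hv hvlim)
  refine ⟨⋃ m, ⋂ i, U i ∪ A m i, hCap_iUnion_eq_zero hp hnull, fun x hx γ hγ0 hγ1 => ?_⟩
  obtain ⟨m, hm⟩ := exists_nat_one_div_lt (lt_min hγ0 (sub_pos.2 hγ1))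
  have hδm : δ m ≤ min γ (1 - γ) :=
    (one_div_le_one_div_of_le (by positivity) (by linarith)).trans hm.le
  obtain ⟨i, hi⟩ : ∃ i, x ∉ U i ∧ x ∉ A m i := by
    simp only [mem_iUnion, mem_iInter, mem_union, not_exists, not_forall, not_or] at hx
    exact hx m
  refine basisLim_med_of_measure_inter_lt h𝓑 hfin hu (hcont i x hi.1) (hδ0 m)
    (hδm.trans (min_le_left _ _)) (by linarith [min_le_right γ (1 - γ)]) fun B hB => ?_
  refine measure_inter_lt_of_realMed_lt_one (hv i).1.abs (h𝓑.measurableSet x B hB)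
    (h𝓑.pos x B hB).ne' (h𝓑.measure_lt_top hfin hB).ne (hδ0 m)
    (fun z hz => (hvU i z hz).trans (le_abs_self _)) ?_
  have hmax := hi.2
  simp only [A, mem_ofPred_eq, lt_medMax_iff, not_exists, not_and, not_lt] at hmax
  exact (hmax B ⟨x, hB⟩ (h𝓑.mem_of x B hB)).trans_lt (by norm_num)

end Implications

theorem stmt18_general {X : Type*} [MetricSpace X] [MeasurableSpace X]
    (μ : Measure X)
    (hball : ∀ (x : X) (r : ℝ), 0 < r → 0 < μ (ball x r) ∧ μ (ball x r) < ⊤)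
    (𝓑 : X → Set (Set X)) (h𝓑 : IsBFBasis μ 𝓑)
    (s p : ℝ) (hp : 1 < p) :
    ((∀ γ : ℝ, 0 < γ → γ < 1 → ∀ u : X → ℝ, MemHaj μ s p u →
        Tendsto
          (fun lam : ℝ =>
            hCap μ s p {x | (lam : EReal) < medMax μ 𝓑 (fun z => (u z : EReal)) γ x})
          atTop (𝓝 0)) →
      (∀ γ : ℝ, 0 < γ → γ < 1 → ∀ lam : ℝ, 0 < lam →
        ∀ uk : ℕ → X → ℝ, (∀ k, MemHaj μ s p (uk k)) →
          Tendsto (fun k => hajNorm μ s p (uk k)) atTop (𝓝 0) →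
          Tendsto
            (fun k =>
              hCap μ s p {x | (lam : EReal) < medMax μ 𝓑 (fun z => (uk k z : EReal)) γ x})
            atTop (𝓝 0))) ∧
    ((∀ γ : ℝ, 0 < γ → γ < 1 → ∀ lam : ℝ, 0 < lam →
        ∀ uk : ℕ → X → ℝ, (∀ k, MemHaj μ s p (uk k)) →
          Tendsto (fun k => hajNorm μ s p (uk k)) atTop (𝓝 0) →
          Tendsto
            (fun k =>
              hCap μ s p {x | (lam : EReal) < medMax μ 𝓑 (fun z => (uk k z : EReal)) γ x})
            atTop (𝓝 0)) →
      (∀ u : X → ℝ, MemHaj μ s p u → QuasiCont μ s p u →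
        ∃ E : Set X, hCap μ s p E = 0 ∧ ∀ x ∉ E, ∀ γ : ℝ, 0 < γ → γ < 1 →
          BasisLim 𝓑 x (fun B => med μ (fun z => (u z : EReal)) B γ) (u x))) := by
  have hfin : ∀ (x : X) (r : ℝ), 0 < r → μ (ball x r) < ⊤ := fun x r hr => (hball x r hr).2
  exact ⟨fun h1 γ hγ0 hγ1 _ hlam _ hmem hnorm => tendsto_hCap_setOf_lt_medMax hp.le
      h𝓑.toIsDiffBasis hfin hγ0 hγ1 (h1 γ hγ0 hγ1) hlam hmem hnorm,
    fun h2 _ hu hqc =>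
      exists_hCap_eq_zero_basisLim_med hp.le h𝓑.toIsDiffBasis hfin h2 hu.1 hqc⟩

/-- for a Busemann–Feller basis on a separable space and `1 < p < ∞`:
(1) ⇒ (2) and (2) ⇒ (3), where (1), (2), (3) are the capacitary conditions on the median
maximal function and the median differentiation property for quasicontinuous functions. -/
theorem stmt18 {X : Type*} [MetricSpace X] [MeasurableSpace X] [BorelSpace X]
    [TopologicalSpace.SeparableSpace X]
    (μ : Measure X)
    (hball : ∀ (x : X) (r : ℝ), 0 < r → 0 < μ (ball x r) ∧ μ (ball x r) < ⊤)
    (𝓑 : X → Set (Set X)) (h𝓑 : IsBFBasis μ 𝓑)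
    (s p : ℝ) (hs0 : 0 < s) (hs1 : s ≤ 1) (hp : 1 < p) :
    ((∀ γ : ℝ, 0 < γ → γ < 1 → ∀ u : X → ℝ, MemHaj μ s p u →
        Tendsto
          (fun lam : ℝ =>
            hCap μ s p {x | (lam : EReal) < medMax μ 𝓑 (fun z => (u z : EReal)) γ x})
          atTop (𝓝 0)) →
      (∀ γ : ℝ, 0 < γ → γ < 1 → ∀ lam : ℝ, 0 < lam →
        ∀ uk : ℕ → X → ℝ, (∀ k, MemHaj μ s p (uk k)) →
          Tendsto (fun k => hajNorm μ s p (uk k)) atTop (𝓝 0) →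
          Tendsto
            (fun k =>
              hCap μ s p {x | (lam : EReal) < medMax μ 𝓑 (fun z => (uk k z : EReal)) γ x})
            atTop (𝓝 0))) ∧
    ((∀ γ : ℝ, 0 < γ → γ < 1 → ∀ lam : ℝ, 0 < lam →
        ∀ uk : ℕ → X → ℝ, (∀ k, MemHaj μ s p (uk k)) →
          Tendsto (fun k => hajNorm μ s p (uk k)) atTop (𝓝 0) →
          Tendsto
            (fun k =>
              hCap μ s p {x | (lam : EReal) < medMax μ 𝓑 (fun z => (uk k z : EReal)) γ x})
            atTop (𝓝 0)) →
      (∀ u : X → ℝ, MemHaj μ s p u → QuasiCont μ s p u →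
        ∃ E : Set X, hCap μ s p E = 0 ∧ ∀ x ∉ E, ∀ γ : ℝ, 0 < γ → γ < 1 →
          BasisLim 𝓑 x (fun B => med μ (fun z => (u z : EReal)) B γ) (u x))) :=
  stmt18_general μ hball 𝓑 h𝓑 s p hp
end
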